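/- Let S₀, S₁ be i.i.d. {0,1}-valued random variables and let (X₁,X₂) be {0,1}²-valued random variables independent of (S₀,S₁) (with arbitrary joint law of X₁ and X₂). Define T = S₀ if X₁ = X₂ and T = S₁ if X₁ ≠ X₂. Then H(T | X₁,X₂) = H(S₀) and H(S₀,S₁ | X₁,X₂,T) = H(S₀). -/

import Mathlib

open scoped BigOperators
open Classical

noncomputable section

/-- Probability that the random variable `X` equals `x` under the pmf `p`. -/
def pr {Ω α : Type*} [Fintype Ω] (p : Ω → ℝ) (X : Ω → α) (x : α) : ℝ :=
  ∑ ω : Ω, if X ω = x then p ω else 0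

/-- Shannon entropy (in bits), with the convention `0 · log₂ 0 = 0`. -/
def ent {Ω α : Type*} [Fintype Ω] (p : Ω → ℝ) (X : Ω → α) : ℝ :=
  -∑ x ∈ Finset.univ.image X, pr p X x * Real.logb 2 (pr p X x)

/-- Conditional entropy `H(X|Y) = H(X,Y) - H(Y)`. -/
def condEnt {Ω α β : Type*} [Fintype Ω] (p : Ω → ℝ) (X : Ω → α) (Y : Ω → β) : ℝ :=
  ent p (fun ω => (X ω, Y ω)) - ent p Y

/-- Mutual information `I(X;Y) = H(X) + H(Y) - H(X,Y)`. -/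
def mi {Ω α β : Type*} [Fintype Ω] (p : Ω → ℝ) (X : Ω → α) (Y : Ω → β) : ℝ :=
  ent p X + ent p Y - ent p (fun ω => (X ω, Y ω))

/-- Conditional mutual information `I(X;Y|Z) = H(X,Z) + H(Y,Z) - H(X,Y,Z) - H(Z)`. -/
def cmi {Ω α β γ : Type*} [Fintype Ω] (p : Ω → ℝ) (X : Ω → α) (Y : Ω → β) (Z : Ω → γ) : ℝ :=
  ent p (fun ω => (X ω, Z ω)) + ent p (fun ω => (Y ω, Z ω))
    - ent p (fun ω => (X ω, Y ω, Z ω)) - ent p Z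

/-- `p` is a probability mass function on the finite sample space `Ω`. -/
def IsPMF {Ω : Type*} [Fintype Ω] (p : Ω → ℝ) : Prop :=
  (∀ ω, 0 ≤ p ω) ∧ ∑ ω : Ω, p ω = 1

/-- The random variables `X` and `Y` are independent under `p`. -/
def IndepRV {Ω α β : Type*} [Fintype Ω] (p : Ω → ℝ) (X : Ω → α) (Y : Ω → β) : Prop :=
  ∀ x y, pr p (fun ω => (X ω, Y ω)) (x, y) = pr p X x * pr p Y y

end

/-!
Write `X = (X₁, X₂)`, `S = (S₀, S₁)` and `T = select X S`, where `select x` reads `S₀` or `S₁`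
according to whether `x₁ = x₂`. On the event `X = x` the variable `T` coincides with the single
coordinate `select x S`, which is independent of `X` and distributed like `S₀`; hence `(T, X)`
has the product law of `S₀` and `X`, and `H(T, X) = H(S₀) + H(X)`. Since `T` is a function of
`(X, S)`, adjoining it changes no entropy: `H(S, X, T) = H(S, X) = 2 H(S₀) + H(X)`.
-/

section

variable {Ω α β γ : Type*} [Fintype Ω] (p : Ω → ℝ)

lemma pr_eq_pr_of_iff (X : Ω → α) (Y : Ω → β) (x : α) (y : β)
    (h : ∀ ω, X ω = x ↔ Y ω = y) : pr p X x = pr p Y y :=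
  Finset.sum_congr rfl fun ω _ => by simp only [h ω]

lemma pr_comp_of_injective {f : α → β} (hf : f.Injective) (X : Ω → α) (x : α) :
    pr p (fun ω => f (X ω)) (f x) = pr p X x :=
  pr_eq_pr_of_iff p _ _ _ _ fun _ => hf.eq_iff

lemma pr_swap (X : Ω → α) (Y : Ω → β) (x : α) (y : β) :
    pr p (fun ω => (Y ω, X ω)) (y, x) = pr p (fun ω => (X ω, Y ω)) (x, y) :=
  pr_comp_of_injective p Prod.swap_injective (fun ω => (X ω, Y ω)) (x, y)

lemma sum_pr [Fintype α] (hp : ∑ ω, p ω = 1) (X : Ω → α) : ∑ x, pr p X x = 1 := by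
  unfold pr
  rw [Finset.sum_comm, ← hp]
  simp

lemma pr_pair_comp_right [Fintype β] (X : Ω → α) (S : Ω → β) (g : β → γ) (x : α) (c : γ) :
    pr p (fun ω => (X ω, g (S ω))) (x, c)
      = ∑ s ∈ Finset.univ.filter (g · = c), pr p (fun ω => (X ω, S ω)) (x, s) := by
  unfold pr
  rw [Finset.sum_comm]
  refine Finset.sum_congr rfl fun ω _ => ?_
  by_cases hx : X ω = x <;> simp [hx, Finset.sum_ite_eq]

lemma pr_comp [Fintype β] (S : Ω → β) (g : β → γ) (c : γ) :
    pr p (fun ω => g (S ω)) c = ∑ s ∈ Finset.univ.filter (g · = c), pr p S s := by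
  unfold pr
  rw [Finset.sum_comm]
  refine Finset.sum_congr rfl fun ω _ => ?_
  simp [Finset.sum_ite_eq]

lemma IndepRV.comp_right [Fintype β] {X : Ω → α} {S : Ω → β} (h : IndepRV p X S)
    (g : β → γ) : IndepRV p X (fun ω => g (S ω)) := by
  intro x c
  rw [pr_pair_comp_right, pr_comp p S g, Finset.mul_sum]
  exact Finset.sum_congr rfl fun s _ => h x s

lemma pr_select_pair_of_indep {X : Ω → α} {S : Ω → β} [Fintype β] (h : IndepRV p X S)
    (g : α → β → γ) (c : γ) (x : α) :
    pr p (fun ω => (g (X ω) (S ω), X ω)) (c, x) = pr p (fun ω => g x (S ω)) c * pr p X x := by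
  have hfreeze : pr p (fun ω => (g (X ω) (S ω), X ω)) (c, x)
      = pr p (fun ω => (g x (S ω), X ω)) (c, x) :=
    pr_eq_pr_of_iff p _ _ _ _ fun ω => by
      simp only [Prod.mk.injEq]
      exact and_congr_left fun hX => hX ▸ Iff.rfl
  rw [hfreeze, pr_swap, h.comp_right p (g x), mul_comm]

lemma ent_eq_neg_sum [Fintype α] (X : Ω → α) :
    ent p X = -∑ x, pr p X x * Real.logb 2 (pr p X x) := by
  unfold ent
  congr 1
  refine Finset.sum_subset (Finset.subset_univ _) fun x _ hx => ?_
  have hx : pr p X x = 0 := Finset.sum_eq_zero fun ω _ =>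
    if_neg fun h : X ω = x => hx (h ▸ Finset.mem_image_of_mem X (Finset.mem_univ ω))
  simp [hx]

lemma ent_comp_of_injective {f : α → β} (hf : f.Injective) (X : Ω → α) :
    ent p (fun ω => f (X ω)) = ent p X := by
  have himage : Finset.univ.image (fun ω => f (X ω)) = (Finset.univ.image X).image f :=
    Finset.image_image.symm
  unfold ent
  rw [himage, Finset.sum_image fun _ _ _ _ h => hf h]
  simp only [pr_comp_of_injective p hf]

lemma mul_mul_logb_mul (a b : ℝ) :
    a * b * Real.logb 2 (a * b) = b * (a * Real.logb 2 a) + a * (b * Real.logb 2 b) := by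
  rcases eq_or_ne a 0 with rfl | ha
  · simp
  rcases eq_or_ne b 0 with rfl | hb
  · simp
  rw [Real.logb_mul ha hb]
  ring

lemma sum_mul_mul_logb_mul {ι κ : Type*} [Fintype ι] [Fintype κ] {f : ι → ℝ} {g : κ → ℝ}
    (hf : ∑ i, f i = 1) (hg : ∑ j, g j = 1) :
    ∑ i, ∑ j, f i * g j * Real.logb 2 (f i * g j)
      = ∑ i, f i * Real.logb 2 (f i) + ∑ j, g j * Real.logb 2 (g j) := by
  simp only [mul_mul_logb_mul, Finset.sum_add_distrib, ← Finset.sum_mul, ← Finset.mul_sum, hf, hg,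
    one_mul]

lemma ent_pair_eq_add_of_pr_eq_mul [Fintype α] [Fintype β] (hp : ∑ ω, p ω = 1)
    {X X' : Ω → α} {Y Y' : Ω → β}
    (h : ∀ x y, pr p (fun ω => (X ω, Y ω)) (x, y) = pr p X' x * pr p Y' y) :
    ent p (fun ω => (X ω, Y ω)) = ent p X' + ent p Y' := by
  rw [ent_eq_neg_sum, ent_eq_neg_sum, ent_eq_neg_sum, Fintype.sum_prod_type]
  simp only [h, sum_mul_mul_logb_mul (sum_pr p hp X') (sum_pr p hp Y')]
  ring

end

/-- Let `S₀, S₁` be i.i.d. `{0,1}`-valued random variables and `(X₁,X₂)` be independent of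
`(S₀,S₁)` (with arbitrary joint law).  With `T = S₀` if `X₁ = X₂` and `T = S₁` otherwise,
`H(T | X₁,X₂) = H(S₀)` and `H(S₀,S₁ | X₁,X₂,T) = H(S₀)`. -/
theorem selected_state_conditional_entropies
    {Ω : Type*} [Fintype Ω]
    (p : Ω → ℝ) (hp : IsPMF p)
    (S₀ S₁ X₁ X₂ T : Ω → Bool)
    (hSindep : IndepRV p S₀ S₁)
    (hSident : ∀ b, pr p S₀ b = pr p S₁ b)
    (hXS : IndepRV p (fun ω => (X₁ ω, X₂ ω)) (fun ω => (S₀ ω, S₁ ω)))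
    (hT : ∀ ω, T ω = if X₁ ω = X₂ ω then S₀ ω else S₁ ω) :
    condEnt p T (fun ω => (X₁ ω, X₂ ω)) = ent p S₀ ∧
    condEnt p (fun ω => (S₀ ω, S₁ ω)) (fun ω => (X₁ ω, X₂ ω, T ω)) = ent p S₀ := by
  set X := fun ω => (X₁ ω, X₂ ω)
  set S := fun ω => (S₀ ω, S₁ ω)
  set select : Bool × Bool → Bool × Bool → Bool := fun x s => if x.1 = x.2 then s.1 else s.2
  obtain rfl : T = fun ω => select (X ω) (S ω) := funext hT
  have hselect : ∀ x, pr p (fun ω => select x (S ω)) = pr p S₀ := by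
    rintro ⟨x₁, x₂⟩
    by_cases hx : x₁ = x₂
    · simp [select, S, hx]
    · ext b; simp [select, S, hx, hSident b]
  have hTX : ∀ t x, pr p (fun ω => (select (X ω) (S ω), X ω)) (t, x) = pr p S₀ t * pr p X x := by
    intro t x
    rw [pr_select_pair_of_indep p hXS, hselect]
  have entTX := ent_pair_eq_add_of_pr_eq_mul p hp.2 hTX
  have entS := ent_pair_eq_add_of_pr_eq_mul p hp.2 (X := S₀) (Y := S₁) (Y' := S₀) fun s₀ s₁ => by
    rw [hSindep, ← hSident s₁]
  have entSX := ent_pair_eq_add_of_pr_eq_mul p hp.2 (X := S) (Y := X) fun s x => by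
    rw [pr_swap, hXS, mul_comm]
  have entXT : ent p (fun ω => (X₁ ω, X₂ ω, select (X ω) (S ω))) = _ :=
    ent_comp_of_injective p (f := fun tx : Bool × Bool × Bool => (tx.2.1, tx.2.2, tx.1))
      (fun a b h => by simp_all [Prod.ext_iff]) (fun ω => (select (X ω) (S ω), X ω))
  have entSXT : ent p (fun ω => (S ω, X₁ ω, X₂ ω, select (X ω) (S ω))) = _ :=
    ent_comp_of_injective p
      (f := fun sx : (Bool × Bool) × (Bool × Bool) => (sx.1, sx.2.1, sx.2.2, select sx.2 sx.1))
      (fun a b h => by simp_all [Prod.ext_iff]) (fun ω => (S ω, X ω))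
  unfold condEnt
  constructor <;> linarith
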